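/- For the star-graph quantum walk with M ≥ 2 edges, one step of the walk preserves the symmetric subspace: if the state satisfies ψ⁺ i = α⁺ and ψ⁻ i = α⁻ for all i ≠ 0 (for some constants α⁺, α⁻ ∈ ℂ), then the state (ψ'⁺, ψ'⁻) obtained after applying one step U = S ∘ C ∘ O again satisfies that ψ'⁺ i is constant over i ≠ 0 and ψ'⁻ i is constant over i ≠ 0. -/

import Mathlib

/-- One step `U = S ∘ C ∘ O` of the star-graph quantum walk with `M` edges. -/
noncomputable def starStep (M : ℕ) [NeZero M]
    (ψ : (Fin M → ℂ) × (Fin M → ℂ)) : (Fin M → ℂ) × (Fin M → ℂ) :=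
  -- oracle
  let Op : Fin M → ℂ := Function.update ψ.1 0 (-ψ.2 0)
  let Om : Fin M → ℂ := Function.update ψ.2 0 (-ψ.1 0)
  -- coin swaps the two components, then scattering applies `D_M` to the `+` component
  (fun i => ∑ j : Fin M, ((2 / (M : ℂ)) - if i = j then 1 else 0) * Om j, Op)

theorem sum_const_sub_ite_mul {ι R : Type*} [Fintype ι] [DecidableEq ι] [CommRing R]
    (c : R) (v : ι → R) (i : ι) :
    ∑ j, (c - if i = j then 1 else 0) * v j = c * ∑ j, v j - v i := by
  simp only [sub_mul, ite_mul, one_mul, zero_mul, Finset.sum_sub_distrib, Finset.mul_sum,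
    Finset.sum_ite_eq, Finset.mem_univ, if_true]

section starStep

variable {M : ℕ} [NeZero M] (ψ : (Fin M → ℂ) × (Fin M → ℂ)) {i : Fin M}

theorem starStep_fst_apply_of_ne (hi : i ≠ 0) :
    (starStep M ψ).1 i = 2 / (M : ℂ) * ∑ j, Function.update ψ.2 0 (-ψ.1 0) j - ψ.2 i :=
  (sum_const_sub_ite_mul _ _ i).trans (congrArg _ (Function.update_of_ne hi _ _))

theorem starStep_snd_apply_of_ne (hi : i ≠ 0) : (starStep M ψ).2 i = ψ.1 i :=
  Function.update_of_ne hi _ _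

end starStep

theorem starStep_preserves_symmetric_subspace_general
    (M : ℕ) [NeZero M] (ψp ψm : Fin M → ℂ) (αp αm : ℂ)
    (h : ∀ i : Fin M, i ≠ 0 → ψp i = αp ∧ ψm i = αm) :
    ∃ βp βm : ℂ, ∀ i : Fin M, i ≠ 0 →
      (starStep M (ψp, ψm)).1 i = βp ∧ (starStep M (ψp, ψm)).2 i = βm :=
  ⟨_, αp, fun i hi =>
    ⟨(starStep_fst_apply_of_ne (ψp, ψm) hi).trans (congrArg _ (h i hi).2),
      (starStep_snd_apply_of_ne (ψp, ψm) hi).trans (h i hi).1⟩⟩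

/-- One step of the star-graph walk preserves the symmetric subspace: if `ψ⁺` and `ψ⁻` are
constant away from the marked edge `0`, so is the state obtained after one step. -/
theorem starStep_preserves_symmetric_subspace
    (M : ℕ) [NeZero M] (hM : 2 ≤ M) (ψp ψm : Fin M → ℂ) (αp αm : ℂ)
    (h : ∀ i : Fin M, i ≠ 0 → ψp i = αp ∧ ψm i = αm) :
    ∃ βp βm : ℂ, ∀ i : Fin M, i ≠ 0 →
      (starStep M (ψp, ψm)).1 i = βp ∧ (starStep M (ψp, ψm)).2 i = βm :=
  starStep_preserves_symmetric_subspace_general M ψp ψm αp αm h
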